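/- arXiv:2105.07746 — 2 statements merged into one kernel-verified Lean document; each statement's English description precedes it below -/
import Mathlib

section
/- If κ is an inaccessible cardinal and X is a family of fewer than κ stationary subsets of κ, then there exists a stationary set y ⊆ κ such that for every x ∈ X either y ⊆ x or y ∩ x = ∅. In particular, no family of fewer than κ stationary subsets of κ is a stationary splitting family. -/
open Set Cardinal

/-- `c` is a club in the well-ordered type `α` (thought of as the cardinal `κ = #α`):
it is closed (contains the supremum of each of its nonempty bounded subsets) and unbounded. -/
def IsClubIn {α : Type*} [LinearOrder α] (c : Set α) : Prop :=
  (∀ s ⊆ c, s.Nonempty → ∀ a : α, IsLUB s a → a ∈ c) ∧ ∀ a : α, ∃ b ∈ c, a < b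

/-- `x` is stationary: it meets every club. -/
def IsStatIn {α : Type*} [LinearOrder α] (x : Set α) : Prop :=
  ∀ c : Set α, IsClubIn c → (x ∩ c).Nonempty

/-- `y` stationarily splits `x`: both `x ∩ y` and `x \ y` are stationary. -/
def StatSplits {α : Type*} [LinearOrder α] (y x : Set α) : Prop :=
  IsStatIn (x ∩ y) ∧ IsStatIn (x \ y)

/-- `S` is a stationary splitting family: a family of stationary sets such that every
stationary set is stationarily split by some member of `S`. -/
def IsStatSplittingFamily {α : Type*} [LinearOrder α] (S : Set (Set α)) : Prop :=
  (∀ y ∈ S, IsStatIn y) ∧ ∀ x : Set α, IsStatIn x → ∃ y ∈ S, StatSplits y x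

/-!
Sort the points `a < κ` by their type `{x ∈ X | a ∈ x}`; there are at most `2^|X| < κ` types.
The intersection of fewer than `κ` clubs is a club, so some type class `y` is stationary:
otherwise one club would avoid every class. Points of `y` agree on membership in each
`x ∈ X`, so `y ⊆ x` or `y ∩ x = ∅`, and no member of `X` splits `y`.
-/

universe u

section Order

variable {α : Type u} [LinearOrder α]

lemma IsLUB.range_of_le_of_le_succ {f g : ℕ → α} {a : α} (h : IsLUB (range f) a)
    (hfg : ∀ n, f n ≤ g n) (hgf : ∀ n, g n ≤ f (n + 1)) : IsLUB (range g) a := by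
  refine ⟨?_, fun b hb => h.2 ?_⟩
  · rintro _ ⟨n, rfl⟩
    exact (hgf n).trans (h.1 ⟨n + 1, rfl⟩)
  · rintro _ ⟨n, rfl⟩
    exact (hfg n).trans (hb ⟨n, rfl⟩)

lemma exists_isLUB_of_mem_upperBounds [WellFoundedLT α] {s : Set α} {b : α}
    (hb : b ∈ upperBounds s) : ∃ a, IsLUB s a := by
  obtain ⟨m, hm, hmin⟩ := wellFounded_lt.has_min (upperBounds s) ⟨b, hb⟩
  exact ⟨m, hm, fun x hx => not_lt.1 (hmin x hx)⟩

lemma isClubIn_univ [NoMaxOrder α] : IsClubIn (univ : Set α) :=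
  ⟨fun _ _ _ _ _ => trivial, fun a => (exists_gt a).imp fun _ hb => ⟨trivial, hb⟩⟩

lemma not_isStatIn_empty [NoMaxOrder α] : ¬ IsStatIn (∅ : Set α) := fun h => by
  simpa using h univ isClubIn_univ

lemma not_isStatSplittingFamily_of_forall_subset_or_disjoint [NoMaxOrder α]
    {S : Set (Set α)} {y : Set α} (hy : IsStatIn y) (hyS : ∀ x ∈ S, y ⊆ x ∨ y ∩ x = ∅) :
    ¬ IsStatSplittingFamily S := by
  rintro ⟨-, hsplit⟩
  obtain ⟨x, hxS, hyx, hy_x⟩ := hsplit y hy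
  rcases hyS x hxS with hsub | hdisj
  · exact not_isStatIn_empty (sdiff_eq_empty.2 hsub ▸ hy_x)
  · exact not_isStatIn_empty (hdisj ▸ hyx)

end Order

section Regular

variable {α : Type u} [LinearOrder α]

lemma exists_forall_lt_of_mk_lt (hreg : (#α).IsRegular) (hinit : ∀ a : α, #(Iio a) < #α)
    {s : Set α} (hs : #s < #α) : ∃ b, ∀ a ∈ s, a < b := by
  by_contra! hunbdd
  have hcover : (univ : Set α) ⊆ ⋃ a : s, Iic (a : α) := fun b _ =>
    let ⟨a, ha, hba⟩ := hunbdd b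
    mem_iUnion.2 ⟨⟨a, ha⟩, hba⟩
  have hIic : ∀ a : s, #(Iic (a : α)) < #α := fun a =>
    calc #(Iic (a : α)) = #(insert (a : α) (Iio a) : Set α) := by rw [Iio_insert]
      _ ≤ #(Iio (a : α)) + 1 := mk_insert_le
      _ < #α := add_lt_of_lt hreg.aleph0_le (hinit a) (one_lt_aleph0.trans_le hreg.aleph0_le)
  have := calc #α = #(univ : Set α) := mk_univ.symm
    _ ≤ #(⋃ a : s, Iic (a : α)) := mk_le_mk_of_subset hcover
    _ ≤ Cardinal.sum fun a : s => #(Iic (a : α)) := mk_iUnion_le_sum_mk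
    _ < #α := sum_lt_of_isRegular hreg hs hIic
  exact this.false

lemma noMaxOrder_of_isRegular (hreg : (#α).IsRegular) (hinit : ∀ a : α, #(Iio a) < #α) :
    NoMaxOrder α := by
  refine ⟨fun a => ?_⟩
  obtain ⟨b, hb⟩ := exists_forall_lt_of_mk_lt hreg hinit (s := {a})
    (by simpa using one_lt_aleph0.trans_le hreg.aleph0_le)
  exact ⟨b, hb a rfl⟩

lemma exists_gt_forall_lt_of_mk_lt (hreg : (#α).IsRegular) (hinit : ∀ a : α, #(Iio a) < #α)
    {ι : Type u} (hι : #ι < #α) (b : α) (f : ι → α) : ∃ g, b < g ∧ ∀ i, f i < g := by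
  have hcard : #(insert b (range f) : Set α) < #α :=
    calc #(insert b (range f) : Set α) ≤ #(range f) + 1 := mk_insert_le
      _ ≤ #ι + 1 := by gcongr; exact mk_range_le
      _ < #α := add_lt_of_lt hreg.aleph0_le hι (one_lt_aleph0.trans_le hreg.aleph0_le)
  obtain ⟨g, hg⟩ := exists_forall_lt_of_mk_lt hreg hinit hcard
  exact ⟨g, hg b (mem_insert _ _), fun i => hg (f i) (mem_insert_of_mem _ ⟨i, rfl⟩)⟩

variable [WellFoundedLT α]

lemma isClubIn_iInter (h0 : ℵ₀ < #α) (hreg : (#α).IsRegular)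
    (hinit : ∀ a : α, #(Iio a) < #α) {ι : Type u} (hι : #ι < #α)
    {c : ι → Set α} (hc : ∀ i, IsClubIn (c i)) : IsClubIn (⋂ i, c i) := by
  refine ⟨fun s hs hne a ha => mem_iInter.2 fun i =>
    (hc i).1 s (hs.trans (iInter_subset _ i)) hne a ha, fun a => ?_⟩
  choose f hfc hlt_f using fun i => (hc i).2
  choose g hlt_g hf_lt_g using fun b => exists_gt_forall_lt_of_mk_lt hreg hinit hι b (f · b)
  -- `seq` runs through all the clubs `c i` at once: `seq n < f i (seq n) < seq (n + 1)`.
  set seq : ℕ → α := fun n => g^[n] a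
  have hseq_succ : ∀ n, seq (n + 1) = g (seq n) := fun n => Function.iterate_succ_apply' g n a
  obtain ⟨b, hb⟩ := exists_forall_lt_of_mk_lt hreg hinit
    ((countable_range seq).le_aleph0.trans_lt h0)
  obtain ⟨sup, hsup⟩ := exists_isLUB_of_mem_upperBounds fun x hx => (hb x hx).le
  refine ⟨sup, mem_iInter.2 fun i => ?_, ?_⟩
  · have hlub : IsLUB (range fun n => f i (seq n)) sup :=
      hsup.range_of_le_of_le_succ (fun n => (hlt_f i _).le)
        (fun n => (hseq_succ n ▸ hf_lt_g _ i).le)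
    exact (hc i).1 _ (range_subset_iff.2 fun n => hfc i _) (range_nonempty _) sup hlub
  · calc a < seq 1 := hlt_g a
      _ ≤ sup := hsup.1 ⟨1, rfl⟩

lemma exists_isStatIn_preimage_singleton (h0 : ℵ₀ < #α) (hreg : (#α).IsRegular)
    (hinit : ∀ a : α, #(Iio a) < #α) {β : Type u} (hβ : #β < #α) (f : α → β) :
    ∃ t, IsStatIn (f ⁻¹' {t}) := by
  by_contra! hnot
  simp only [IsStatIn, not_forall, not_nonempty_iff_eq_empty] at hnot
  choose c hc hdisj using hnot
  have : Nonempty α := mk_ne_zero_iff.1 (aleph0_pos.trans h0).ne'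
  obtain ⟨b, hb, -⟩ := (isClubIn_iInter h0 hreg hinit hβ hc).2 (Classical.arbitrary α)
  have hmem : b ∈ f ⁻¹' {f b} ∩ c (f b) := ⟨rfl, mem_iInter.1 hb (f b)⟩
  simp [hdisj] at hmem

end Regular

theorem small_families_do_not_split_general {α : Type*} [LinearOrder α] [WellFoundedLT α]
    (hinacc : (#α).IsInaccessible)
    (hinit : ∀ a : α, #(Set.Iio a) < #α)
    (X : Set (Set α)) (hXcard : #X < #α) :
    (∃ y : Set α, IsStatIn y ∧ ∀ x ∈ X, y ⊆ x ∨ y ∩ x = ∅) ∧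
    ¬ IsStatSplittingFamily X := by
  have hreg := hinacc.isRegular
  have htypes : #(Set X) < #α := mk_set ▸ hinacc.isStrongLimit.isStrongPrelimit hXcard
  obtain ⟨t, ht⟩ := exists_isStatIn_preimage_singleton hinacc.aleph0_lt hreg hinit htypes
    fun a => {x : X | a ∈ (x : Set α)}
  set y := (fun a => {x : X | a ∈ (x : Set α)}) ⁻¹' {t}
  have hhom : ∀ x ∈ X, y ⊆ x ∨ y ∩ x = ∅ := fun x hx => by
    by_cases hxt : (⟨x, hx⟩ : X) ∈ t
    · exact Or.inl fun a (ha : _ = t) => by rw [← ha] at hxt; exact hxt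
    · exact Or.inr (eq_empty_of_forall_notMem fun a ⟨(ha : _ = t), hax⟩ => hxt (ha ▸ hax))
  have := noMaxOrder_of_isRegular hreg hinit
  exact ⟨⟨_, ht, hhom⟩, not_isStatSplittingFamily_of_forall_subset_or_disjoint ht hhom⟩

/-- If `κ` is inaccessible and `X` is a family of fewer than `κ` stationary subsets of `κ`,
then there is a stationary `y` with `y ⊆ x` or `y ∩ x = ∅` for every `x ∈ X`; in particular
`X` is not a stationary splitting family. Here `κ` is represented as a well-ordered type `α`
of inaccessible cardinality all of whose proper initial segments are of size `< #α`. -/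
theorem small_families_do_not_split {α : Type*} [LinearOrder α] [WellFoundedLT α]
    (hinacc : (#α).IsInaccessible)
    (hinit : ∀ a : α, #(Set.Iio a) < #α)
    (X : Set (Set α)) (hXcard : #X < #α) (hXstat : ∀ x ∈ X, IsStatIn x) :
    (∃ y : Set α, IsStatIn y ∧ ∀ x ∈ X, y ⊆ x ∨ y ∩ x = ∅) ∧
    ¬ IsStatSplittingFamily X :=
  small_families_do_not_split_general hinacc hinit X hXcard
end

section
/- Let κ be a regular uncountable cardinal. Then κ has the normal* filter property if and only if κ is ineffable. -/
open Set Cardinal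

/-- `F` is a uniform filter on `κ`: a filter all of whose members have cardinality `κ`,
containing all co-bounded sets. -/
def IsUniformFilter {α : Type*} [LinearOrder α] (F : Set (Set α)) : Prop :=
  Set.univ ∈ F ∧ (∀ x ∈ F, ∀ y : Set α, x ⊆ y → y ∈ F) ∧
    (∀ x ∈ F, ∀ y ∈ F, x ∩ y ∈ F) ∧ (∀ x ∈ F, #x = #α) ∧
    ∀ x : Set α, BddAbove xᶜ → x ∈ F

/-- `F` is normal*: the diagonal intersection of every `κ`-sequence of members of `F` is
stationary. -/
def IsNormalStar {α : Type*} [LinearOrder α] (F : Set (Set α)) : Prop :=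
  ∀ f : α → Set α, (∀ i, f i ∈ F) → IsStatIn {k : α | ∀ i < k, k ∈ f i}

/-- `F` measures `X`: for every `x ∈ X` either `x ∈ F` or `κ \ x ∈ F`. -/
def Measures {α : Type*} (F X : Set (Set α)) : Prop :=
  ∀ x ∈ X, x ∈ F ∨ xᶜ ∈ F

/-- `κ` has the normal* filter property: every `X ⊆ P(κ)` of size at most `κ` is measured
by some normal* uniform filter. -/
def NormalStarFilterProperty (α : Type*) [LinearOrder α] : Prop :=
  ∀ X : Set (Set α), #X ≤ #α →
    ∃ F : Set (Set α), IsUniformFilter F ∧ IsNormalStar F ∧ Measures F X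

/-- `κ` is ineffable: for every partition `f` of the two-element subsets `{i, j}` (`i < j`)
of `κ` into two pieces there is a stationary homogeneous set. -/
def Ineffable (α : Type*) [LinearOrder α] : Prop :=
  ∀ f : α → α → Bool, ∃ x : Set α, IsStatIn x ∧
    ∃ c : Bool, ∀ i ∈ x, ∀ j ∈ x, i < j → f i j = c

/-!
For the forward direction, given a colouring `f`, let a normal* filter `F` measure the sets
`{j | f i j}` and let `c i` record whether this set or its complement lies in `F`. The diagonal
intersection of the chosen sets is stationary and on it `f i j = c i` for `i < j`; one colour class
of `c` in it is stationary and homogeneous.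

Conversely, ineffability first makes `κ` a strong limit: if `μ < κ` is least with `κ ≤ 2 ^ μ`,
a homogeneous set for the lexicographic comparison of `κ` distinct elements of `2 ^ μ` is a
lexicographic chain of length `κ`. The first point where a term differs from its successor is
constant on a subchain of size `κ`, which then injects into `2 ^ [0, p]` for some `p < μ`.
Next, given `v β : κ → 2` for `β < κ`, colour `β < γ` by comparing `v β` and `v γ`
lexicographically below `β`. On a stationary homogeneous set the restrictions of the `v β` to each
`[0, a]` are monotone, hence eventually constant by the strong limit property, and on its
intersection with a club of closure points every `v β` agrees below `β` with a single `E`.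
Enumerating `X` as `(A i)` and taking `v β i = [β ∈ A i]`, the trace of the end filter on that
stationary set is uniform and normal*, and contains `A i` or its complement according to `E i`.
-/


universe u

theorem exists_isLUB_of_bddAbove {α : Type*} [LinearOrder α] [WellFoundedLT α] {s : Set α}
    (hs : BddAbove s) : ∃ a, IsLUB s a :=
  ⟨_, wellFounded_lt.min_mem _ hs, fun _ hb => wellFounded_lt.min_le hb⟩

section Club

variable {α : Type*} [LinearOrder α]

def closurePoints (h : α → α) : Set α := {k | ∀ i < k, h i < k}

theorem isClubIn_Ioi [NoMaxOrder α] (a : α) : IsClubIn (Ioi a) :=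
  ⟨fun _ hs ⟨_, he⟩ _ hb => (hs he).trans_le (hb.1 he),
    fun b => let ⟨c, hc⟩ := exists_gt (max a b); ⟨c, (le_max_left a b).trans_lt hc,
      (le_max_right a b).trans_lt hc⟩⟩

theorem IsStatIn.not_bddAbove [NoMaxOrder α] {x : Set α} (hx : IsStatIn x) : ¬BddAbove x :=
  fun ⟨b, hb⟩ => let ⟨_, hex, hbe⟩ := hx _ (isClubIn_Ioi b); (hb hex).not_gt hbe

theorem IsStatIn.mono {x y : Set α} (hxy : x ⊆ y) (hx : IsStatIn x) : IsStatIn y :=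
  fun c hc => (hx c hc).mono (inter_subset_inter_left _ hxy)

theorem IsClubIn.mem_of_cofinal {c : Set α} (hc : IsClubIn c) {a k : α} (hak : a < k)
    (hcof : ∀ i < k, ∃ j ∈ c, i < j ∧ j < k) : k ∈ c := by
  obtain ⟨j, hjc, -, hjk⟩ := hcof a hak
  refine hc.1 (c ∩ Iio k) inter_subset_left ⟨j, hjc, hjk⟩ k ⟨fun _ hi => le_of_lt hi.2, ?_⟩
  intro u hu
  by_contra! huk
  obtain ⟨j, hjc, huj, hjk⟩ := hcof u huk
  exact (hu ⟨hjc, hjk⟩).not_gt huj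

end Club

structure IsRegularUncountable (α : Type*) [LinearOrder α] : Prop where
  isRegular : (#α).IsRegular
  aleph0_lt : ℵ₀ < #α
  mk_Iio_lt : ∀ a : α, #(Iio a) < #α

namespace IsRegularUncountable

variable {α : Type u} [LinearOrder α]

theorem mk_Iic_lt (hκ : IsRegularUncountable α) (a : α) : #(Iic a) < #α := by
  rw [← Iio_insert]
  exact mk_insert_le.trans_lt
    (add_lt_of_lt hκ.aleph0_lt.le (hκ.mk_Iio_lt a) (one_lt_aleph0.trans hκ.aleph0_lt))

theorem bddAbove_of_mk_lt (hκ : IsRegularUncountable α) {s : Set α} (hs : #s < #α) :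
    BddAbove s := by
  by_contra hs'
  have hcover : (univ : Set α) ⊆ ⋃ b : s, Iic (b : α) := fun x _ =>
    let ⟨y, hy, hxy⟩ := not_bddAbove_iff.1 hs' x
    mem_iUnion.2 ⟨⟨y, hy⟩, hxy.le⟩
  have hle := (mk_univ.symm.le.trans (mk_le_mk_of_subset hcover)).trans mk_iUnion_le_sum_mk
  exact hle.not_gt (sum_lt_of_isRegular hκ.isRegular hs fun b => hκ.mk_Iic_lt b)

theorem mk_eq_of_not_bddAbove (hκ : IsRegularUncountable α) {s : Set α} (hs : ¬BddAbove s) :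
    #s = #α :=
  (mk_set_le s).antisymm (not_lt.1 fun h => hs (hκ.bddAbove_of_mk_lt h))

theorem nonempty (hκ : IsRegularUncountable α) : Nonempty α :=
  mk_ne_zero_iff.1 (aleph0_pos.trans hκ.aleph0_lt).ne'

theorem noMaxOrder (hκ : IsRegularUncountable α) : NoMaxOrder α := ⟨fun a => by
  by_contra! h
  exact (hκ.mk_Iic_lt a).ne (by rw [show Iic a = Set.univ from eq_univ_of_forall h, mk_univ])⟩

theorem exists_eq_of_monotoneOn (hκ : IsRegularUncountable α) {β : Type u} [PartialOrder β]
    (hβ : #β < #α) {s : Set α} (hs : ¬BddAbove s) {r : α → β} (hr : MonotoneOn r s) :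
    ∃ b e, ∀ γ ∈ s, b < γ → r γ = e := by
  obtain ⟨e, he⟩ : ∃ e, ¬BddAbove (s ∩ r ⁻¹' {e}) := by
    by_contra! hbdd
    choose bd hbd using hbdd
    obtain ⟨M, hM⟩ := hκ.bddAbove_of_mk_lt (mk_range_le.trans_lt hβ : #(range bd) < #α)
    exact hs ⟨M, fun γ hγ => (hbd (r γ) ⟨hγ, rfl⟩).trans (hM ⟨r γ, rfl⟩)⟩
  have := hκ.nonempty
  obtain ⟨γ₀, hγ₀, rfl⟩ := nonempty_of_not_bddAbove he
  refine ⟨γ₀, r γ₀, fun γ hγ hγ₀γ => ?_⟩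
  obtain ⟨δ, ⟨hδ, hδe⟩, hγδ⟩ := not_bddAbove_iff.1 he γ
  exact le_antisymm (hδe ▸ hr hγ hδ hγδ.le) (hr hγ₀ hγ hγ₀γ.le)

variable [WellFoundedLT α]

theorem isClubIn_closurePoints (hκ : IsRegularUncountable α) (h : α → α) :
    IsClubIn (closurePoints h) := by
  have := hκ.noMaxOrder
  refine ⟨fun s hs _ k hk i hik => ?_, fun a => ?_⟩
  · obtain ⟨e, hes, hie⟩ : ∃ e ∈ s, i < e := by
      by_contra! H
      exact hik.not_ge (hk.2 H)
    exact (hs hes i hie).trans_le (hk.1 hes)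
  have hnext (b : α) : ∃ b', b < b' ∧ ∀ i ≤ b, h i < b' := by
    obtain ⟨m, hm⟩ := hκ.bddAbove_of_mk_lt
      (mk_image_le.trans_lt (hκ.mk_Iic_lt b) : #(h '' Iic b) < #α)
    obtain ⟨b', hb'⟩ := exists_gt (max b m)
    exact ⟨b', (le_max_left b m).trans_lt hb',
      fun i hi => (hm (mem_image_of_mem h hi)).trans_lt ((le_max_right b m).trans_lt hb')⟩
  choose next hlt hnext using hnext
  obtain ⟨k, hk⟩ := exists_isLUB_of_bddAbove (hκ.bddAbove_of_mk_lt
    ((countable_range fun n => next^[n] a).le_aleph0.trans_lt hκ.aleph0_lt))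
  refine ⟨k, fun i hik => ?_, (hlt a).trans_le (hk.1 ⟨1, rfl⟩)⟩
  obtain ⟨n, hn⟩ : ∃ n, i < next^[n] a := by
    by_contra! H
    exact hik.not_ge (hk.2 (forall_mem_range.2 H))
  calc h i < next (next^[n] a) := hnext _ i hn.le
    _ = next^[n + 1] a := (Function.iterate_succ_apply' next n a).symm
    _ ≤ k := hk.1 ⟨n + 1, rfl⟩

theorem isClubIn_inter (hκ : IsRegularUncountable α) {c d : Set α} (hc : IsClubIn c)
    (hd : IsClubIn d) : IsClubIn (c ∩ d) := by
  refine ⟨fun s hs hne a ha => ⟨hc.1 s (hs.trans inter_subset_left) hne a ha,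
    hd.1 s (hs.trans inter_subset_right) hne a ha⟩, fun a => ?_⟩
  choose nc hnc hltc using hc.2
  choose nd hnd hltd using hd.2
  obtain ⟨k, hk, hak⟩ := (hκ.isClubIn_closurePoints fun i => max (nc i) (nd i)).2 a
  have hkc : k ∈ c := hc.mem_of_cofinal hak fun i hi =>
    ⟨nc i, hnc i, hltc i, (le_max_left _ _).trans_lt (hk i hi)⟩
  have hkd : k ∈ d := hd.mem_of_cofinal hak fun i hi =>
    ⟨nd i, hnd i, hltd i, (le_max_right _ _).trans_lt (hk i hi)⟩
  exact ⟨k, ⟨hkc, hkd⟩, hak⟩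

theorem isStatIn_inter (hκ : IsRegularUncountable α) {x c : Set α} (hx : IsStatIn x)
    (hc : IsClubIn c) : IsStatIn (x ∩ c) :=
  fun _ he => let ⟨k, hkx, hkc, hke⟩ := hx _ (hκ.isClubIn_inter hc he); ⟨k, ⟨hkx, hkc⟩, hke⟩

theorem isStatIn_or_of_union (hκ : IsRegularUncountable α) {s t : Set α}
    (h : IsStatIn (s ∪ t)) : IsStatIn s ∨ IsStatIn t := by
  rw [or_iff_not_imp_left]
  intro hs d hd
  simp only [IsStatIn, not_forall] at hs
  obtain ⟨c, hc, hsc⟩ := hs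
  obtain ⟨k, hk | hk, hkc, hkd⟩ := h _ (hκ.isClubIn_inter hc hd)
  · exact (hsc ⟨k, hk, hkc⟩).elim
  · exact ⟨k, hk, hkd⟩

end IsRegularUncountable

section Lex

variable {ι γ : Type*} [LinearOrder ι] [PartialOrder γ]

theorem toLex_domRestrict_le_of_subset {s t : Set ι} (hst : s ⊆ t) (hs : IsLowerSet s)
    {f g : ι → γ} (h : toLex (t.domRestrict f) ≤ toLex (t.domRestrict g)) :
    toLex (s.domRestrict f) ≤ toLex (s.domRestrict g) := by
  rcases h.eq_or_lt with heq | ⟨p, hagree, hlt⟩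
  · exact (congrArg toLex (funext fun q : s => congrFun heq ⟨q, hst q.2⟩)).le
  by_cases hp : p.1 ∈ s
  · exact Or.inr ⟨⟨p, hp⟩, fun q hq => hagree ⟨q, hst q.2⟩ hq, hlt⟩
  · refine (congrArg toLex (funext fun q : s => hagree ⟨q, hst q.2⟩ ?_)).le
    exact lt_of_not_ge fun hpq => hp (hs hpq q.2)

/-- `pt b` is the first point where `w b` differs from its successor in the chain. -/
theorem StrictMono.exists_injOn_domRestrict_Iic {β : Type*} [LinearOrder β] [WellFoundedLT β]
    [NoMaxOrder β] {w : β → Lex (ι → γ)} (hw : StrictMono w) :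
    ∃ pt : β → ι, ∀ p, InjOn (fun b => (Iic p).domRestrict (ofLex (w b))) (pt ⁻¹' {p}) := by
  let := SuccOrder.ofLinearWellFoundedLT β
  choose pt hagree hlt using fun b => hw (Order.lt_succ b)
  refine ⟨pt, fun p => ?_⟩
  have key {b b'} (hbb' : b < b') (hb : pt b = p)
      (heq : ∀ q ≤ p, w b q = w b' q) : False := by
    subst hb
    have : w b' < w (Order.succ b) :=
      ⟨pt b, fun q hq => (heq q hq.le).symm.trans (hagree b q hq), heq _ le_rfl ▸ hlt b⟩
    exact this.not_ge (hw.monotone (Order.succ_le_of_lt hbb'))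
  intro b hb b' hb' h
  have heq : ∀ q ≤ p, w b q = w b' q := fun q hq => congrFun h ⟨q, hq⟩
  rcases lt_trichotomy b b' with hlt | rfl | hgt
  · exact (key hlt hb heq).elim
  · rfl
  · exact (key hgt hb' fun q hq => (heq q hq).symm).elim

end Lex

theorem Cardinal.IsRegular.not_strictMono_lex {β ι : Type u} [LinearOrder β] [WellFoundedLT β]
    [NoMaxOrder β] [LinearOrder ι] {κ : Cardinal.{u}} (hκ : κ.IsRegular) (hβ : κ ≤ #β)
    (hι : #ι < κ) (hpow : ∀ p : ι, #(Iic p → Bool) < κ) (w : β → Lex (ι → Bool)) :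
    ¬StrictMono w := fun hw => by
  obtain ⟨pt, hinj⟩ := hw.exists_injOn_domRestrict_Iic
  obtain ⟨p, hp⟩ := infinite_pigeonhole_card pt κ hβ hκ.aleph0_le (hκ.cof_ord.symm ▸ hι)
  exact (hp.trans (mk_le_of_injective (hinj p).injective)).not_gt (hpow p)

theorem mk_arrow_bool (ι : Type u) : #(ι → Bool) = 2 ^ #ι := by simp

section Ineffable

variable {α : Type u} [LinearOrder α] [WellFoundedLT α]

theorem Ineffable.isStrongLimit (hκ : IsRegularUncountable α) (hin : Ineffable α) :
    (#α).IsStrongLimit := by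
  refine ⟨mk_ne_zero_iff.2 hκ.nonempty, ?_⟩
  by_contra hlim
  obtain ⟨μ, ⟨hμ, hμpow⟩, hmin⟩ :=
    wellFounded_lt.has_min {μ | μ < #α ∧ #α ≤ 2 ^ μ} (not_isStrongPrelimit_iff.1 hlim)
  have hμ0 : ℵ₀ ≤ μ := not_lt.1 fun h =>
    ((power_lt_aleph0 (by simp) h).trans hκ.aleph0_lt).not_ge hμpow
  let ι := μ.ord.ToType
  have hpow (p : ι) : #(Iic p → Bool) < #α := by
    have hp : #(Iic p) < μ := by
      rw [← Iio_insert]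
      exact mk_insert_le.trans_lt (add_lt_of_lt hμ0
        (by simpa using mk_Iio_lt (α := μ.ord.ToType) p (by simp)) (one_lt_aleph0.trans_le hμ0))
    rw [mk_arrow_bool]
    exact not_le.1 fun h => hmin _ ⟨hp.trans hμ, h⟩ hp
  obtain ⟨g⟩ : Nonempty (α ↪ (ι → Bool)) := by
    rwa [← Cardinal.le_def, mk_arrow_bool, mk_ord_toType]
  obtain ⟨x, hx, c, hc⟩ := hin fun i j => decide (toLex (g i) ≤ toLex (g j))
  have := hκ.noMaxOrder
  have : NoMaxOrder x := ⟨fun b =>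
    let ⟨j, hj, hbj⟩ := not_bddAbove_iff.1 hx.not_bddAbove b; ⟨⟨j, hj⟩, hbj⟩⟩
  have hxκ : #α ≤ #x := (hκ.mk_eq_of_not_bddAbove hx.not_bddAbove).ge
  have hι : #ι < #α := (mk_ord_toType μ).trans_lt hμ
  cases c
  -- colour `false` makes the chain decreasing; complementing every term reverses it
  · refine hκ.isRegular.not_strictMono_lex hxκ hι hpow (fun b => toLex fun i => (g b i)ᶜ)
      fun b b' hbb' => ?_
    obtain ⟨p, hagree, hlt⟩ := lt_of_not_ge (of_decide_eq_false (hc b b.2 b' b'.2 hbb'))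
    exact ⟨p, fun q hq => congrArg compl (hagree q hq).symm, compl_lt_compl_iff_lt.2 hlt⟩
  · refine hκ.isRegular.not_strictMono_lex hxκ hι hpow (fun b => toLex (g b))
      fun b b' hbb' => ?_
    exact (of_decide_eq_true (hc b b.2 b' b'.2 hbb')).lt_of_ne
      fun h => hbb'.ne (Subtype.ext (g.injective h))

theorem Ineffable.exists_isStatIn_coherent (hκ : IsRegularUncountable α) (hin : Ineffable α)
    (v : α → α → Bool) : ∃ y, IsStatIn y ∧ ∃ E : α → Bool, ∀ β ∈ y, ∀ i < β, v β i = E i := by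
  have := hκ.noMaxOrder
  have hpow (a : α) : #(Lex (Iic a → Bool)) < #α := by
    rw [show #(Lex (Iic a → Bool)) = #(Iic a → Bool) from rfl, mk_arrow_bool]
    exact (hin.isStrongLimit hκ).isStrongPrelimit (hκ.mk_Iic_lt a)
  let r (a β : α) : Lex (Iic a → Bool) := toLex ((Iic a).domRestrict (v β))
  obtain ⟨x, hx, c, hc⟩ := hin fun β γ =>
    decide (toLex ((Iio β).domRestrict (v β)) ≤ toLex ((Iio β).domRestrict (v γ)))
  have hres {a β : α} (haβ : a < β) {f g : α → Bool}
      (h : toLex ((Iio β).domRestrict f) ≤ toLex ((Iio β).domRestrict g)) :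
      toLex ((Iic a).domRestrict f) ≤ toLex ((Iic a).domRestrict g) :=
    toLex_domRestrict_le_of_subset (Iic_subset_Iio.2 haβ) (isLowerSet_Iic a) h
  have hstab (a : α) : ∃ b e, ∀ β ∈ x ∩ Ioi a, b < β → r a β = e := by
    have hxa : ¬BddAbove (x ∩ Ioi a) := (hκ.isStatIn_inter hx (isClubIn_Ioi a)).not_bddAbove
    cases c
    · have hanti : AntitoneOn (r a) (x ∩ Ioi a) := antitoneOn_iff_forall_lt.2
        fun β hβ γ hγ hβγ =>
          hres hβ.2 (lt_of_not_ge (of_decide_eq_false (hc β hβ.1 γ hγ.1 hβγ))).le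
      obtain ⟨b, e, he⟩ := hκ.exists_eq_of_monotoneOn (β := (Lex (Iic a → Bool))ᵒᵈ)
        (hpow a) hxa hanti.dual_right
      exact ⟨b, OrderDual.ofDual e, fun β hβ hbβ => congrArg OrderDual.ofDual (he β hβ hbβ)⟩
    · exact hκ.exists_eq_of_monotoneOn (hpow a) hxa (monotoneOn_iff_forall_lt.2
        fun β hβ γ hγ hβγ => hres hβ.2 (of_decide_eq_true (hc β hβ.1 γ hγ.1 hβγ)))
  choose bd e he using hstab
  refine ⟨x ∩ closurePoints bd, hκ.isStatIn_inter hx (hκ.isClubIn_closurePoints bd),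
    fun i => ofLex (e i) ⟨i, le_rfl⟩, ?_⟩
  rintro β ⟨hβx, hβ⟩ i hiβ
  exact congrFun (he i β ⟨hβx, hiβ⟩ (hβ i hiβ)) ⟨i, le_rfl⟩

end Ineffable

open Filter

section Filter

variable {α : Type u} [LinearOrder α]

theorem isUniformFilter_atTop_inf_principal (hκ : IsRegularUncountable α) {y : Set α}
    (hy : ¬BddAbove y) : IsUniformFilter (atTop ⊓ 𝓟 y).sets := by
  have := hκ.nonempty
  have := hκ.noMaxOrder
  refine ⟨univ_mem, fun _ hY _ hYZ => mem_of_superset hY hYZ, fun _ hY _ hZ => inter_mem hY hZ,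
    fun Y hY => ?_, fun Y ⟨m, hm⟩ => ?_⟩
  · obtain ⟨a, ha⟩ := mem_atTop_sets.1 (mem_inf_principal.1 hY)
    have htail : ¬BddAbove (y ∩ Ici a) := fun h => hy ((h.union bddAbove_Iio).mono
      fun b hb => (lt_or_ge b a).elim Or.inr fun hab => Or.inl ⟨hb, hab⟩)
    exact (mk_set_le Y).antisymm ((hκ.mk_eq_of_not_bddAbove htail).ge.trans
      (mk_le_mk_of_subset fun b hb => ha b hb.2 hb.1))
  · exact mem_inf_of_left (mem_of_superset (Ioi_mem_atTop m)
      fun b hb => not_not.1 fun hbY => (hm hbY).not_gt hb)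

theorem isNormalStar_atTop_inf_principal [WellFoundedLT α] (hκ : IsRegularUncountable α)
    {y : Set α} (hy : IsStatIn y) : IsNormalStar (atTop ⊓ 𝓟 y).sets := by
  have := hκ.nonempty
  intro f hf
  choose bd hbd using fun i => mem_atTop_sets.1 (mem_inf_principal.1 (hf i))
  exact (hκ.isStatIn_inter hy (hκ.isClubIn_closurePoints bd)).mono
    fun k hk i hik => hbd i k (hk.2 i hik).le hk.1

end Filter

variable {α : Type u} [LinearOrder α] [WellFoundedLT α]

theorem Ineffable.normalStarFilterProperty (hκ : IsRegularUncountable α) (hin : Ineffable α) :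
    NormalStarFilterProperty α := by
  classical
  have := hκ.noMaxOrder
  intro X hX
  obtain ⟨e⟩ := Cardinal.le_def _ _ |>.1 hX
  let A : α → Set α := Function.extend e Subtype.val fun _ => ∅
  obtain ⟨y, hy, E, hE⟩ := hin.exists_isStatIn_coherent hκ fun β i => decide (β ∈ A i)
  refine ⟨(atTop ⊓ 𝓟 y).sets, isUniformFilter_atTop_inf_principal hκ hy.not_bddAbove,
    isNormalStar_atTop_inf_principal hκ hy, fun Y hY => ?_⟩
  have hA : A (e ⟨Y, hY⟩) = Y := e.injective.extend_apply _ _ _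
  set i := e ⟨Y, hY⟩
  have hmem (β : α) (hβ : β ∈ y) (hiβ : i < β) : β ∈ Y ↔ E i = true := by
    rw [← hE β hβ i hiβ, ← hA, decide_eq_true_iff]
  cases hEi : E i
  · exact Or.inr (mem_inf_principal.2 (mem_of_superset (Ioi_mem_atTop i)
      fun β hiβ hβ hβY => by simp [(hmem β hβ hiβ).1 hβY] at hEi))
  · exact Or.inl (mem_inf_principal.2 (mem_of_superset (Ioi_mem_atTop i)
      fun β hiβ hβ => (hmem β hβ hiβ).2 hEi))

theorem NormalStarFilterProperty.ineffable (hκ : IsRegularUncountable α)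
    (h : NormalStarFilterProperty α) : Ineffable α := by
  classical
  intro f
  obtain ⟨F, -, hnormal, hmeas⟩ := h (range fun i => {j | f i j = true}) mk_range_le
  let c (i : α) : Bool := decide ({j | f i j = true} ∈ F)
  have hcF (i : α) : {j | f i j = c i} ∈ F := by
    by_cases hi : {j | f i j = true} ∈ F
    · simp [c, hi]
    · simpa [c, hi, compl_ofPred] using (hmeas _ ⟨i, rfl⟩).resolve_left hi
  set D := {k | ∀ i < k, k ∈ {j | f i j = c i}}
  obtain ⟨b, hb⟩ : ∃ b, IsStatIn (D ∩ c ⁻¹' {b}) := by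
    have hsplit : D ⊆ (D ∩ c ⁻¹' {true}) ∪ (D ∩ c ⁻¹' {false}) := fun k hk => by
      cases h : c k <;> simp [hk, h]
    rcases hκ.isStatIn_or_of_union ((hnormal _ hcF).mono hsplit) with h | h
    exacts [⟨_, h⟩, ⟨_, h⟩]
  exact ⟨_, hb, b, fun i hi j hj hij => (hj.1 i hij).trans hi.2⟩

/-- For a regular uncountable cardinal `κ`, `κ` has the normal* filter property if and only
if `κ` is ineffable. Here `κ` is represented as a well-ordered type `α` of regular
uncountable cardinality all of whose proper initial segments are of size `< #α`. -/
theorem normalStarFilterProperty_iff_ineffable {α : Type*} [LinearOrder α] [WellFoundedLT α]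
    (hreg : (#α).IsRegular) (hunc : ℵ₀ < #α)
    (hinit : ∀ a : α, #(Set.Iio a) < #α) :
    NormalStarFilterProperty α ↔ Ineffable α :=
  have hκ : IsRegularUncountable α := ⟨hreg, hunc, hinit⟩
  ⟨fun h => h.ineffable hκ, fun h => h.normalStarFilterProperty hκ⟩
end
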